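/- arXiv:1708.01085 — 2 statements merged into one kernel-verified Lean document; each statement's English description precedes it below -/
import Mathlib

section
/- Unconditional envelopment theorem, second part: Assume m·[1 − F(θ)] ≠ 1 whenever r ≤ m·μ. If the weakest-first process dies out almost surely (q_W = 1), then every resource dependent branching process Γ on the same arrays dies out almost surely (q_Γ = 1), and consequently the strongest-first process dies out almost surely (q_S = 1). -/
/-!
The weakest-first count `wfCount t c s` is the largest number of the claims `c 1, …, c t`
that can be served jointly from resources `s`, and it is monotone in `t` and in `s`.
Any policy, and in particular strongest-first, serves a set of claims fitting in `s`,
so one generation of any RDBP produces at most `wfCount` of its own offspring and resources.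
Since offspring and resource totals grow with the population, induction on the generation
gives `Γ n ≤ W n` pathwise; hence wherever `W` dies out so do `Γ` and `S`.
-/

open MeasureTheory ProbabilityTheory Filter
open scoped ENNReal

noncomputable section

/-- Weakest-first counting function `N(t,s)` for claims `c 1, …, c t`:
the largest `k ≤ t` such that some `k` of the claims (equivalently, the `k`
smallest ones) have total at most `s`. -/
def wfCount (t : ℕ) (c : ℕ → ℝ) (s : ℝ) : ℕ :=
  sSup {k | k ≤ t ∧ ∃ A : Finset ℕ, A ⊆ Finset.Icc 1 t ∧ A.card = k ∧ ∑ j ∈ A, c j ≤ s}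

/-- Strongest-first counting function `M(t,s)` for claims `c 1, …, c t`:
the largest `k ≤ t` such that the `k` largest of the claims (equivalently,
every `k`-element subset of the claims) have total at most `s`. -/
def sfCount (t : ℕ) (c : ℕ → ℝ) (s : ℝ) : ℕ :=
  sSup {k | k ≤ t ∧ ∀ A : Finset ℕ, A ⊆ Finset.Icc 1 t → A.card = k → ∑ j ∈ A, c j ≤ s}

/-- Counting function `Q^π(t, (c 1, …, c t), s)` of a policy: given a priority
order `prio t c` on the individuals `1, …, t` (a permutation of `{1, …, t}`
which may depend on the claims), it is the largest `k` such that the sum of the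
first `k` claims taken in the priority order does not exceed the resources `s`
(and `0` if already the first such claim exceeds `s`). -/
def policyCount (prio : ℕ → (ℕ → ℝ) → ℕ → ℕ) (t : ℕ) (c : ℕ → ℝ) (s : ℝ) : ℕ :=
  sSup {k | k ≤ t ∧ ∑ j ∈ Finset.Icc 1 k, c (prio t c j) ≤ s}

open Finset

section Counting

variable (t : ℕ) (c : ℕ → ℝ) (s : ℝ)

lemma le_wfCount {k : ℕ} (hk : k ≤ t) {A : Finset ℕ} (hA : A ⊆ Icc 1 t) (hcard : #A = k)
    (hsum : ∑ j ∈ A, c j ≤ s) : k ≤ wfCount t c s :=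
  le_csSup ⟨t, fun _ h => h.1⟩ ⟨hk, A, hA, hcard, hsum⟩

lemma wfCount_mono {t t' : ℕ} {s s' : ℝ} (ht : t ≤ t') (hs : s ≤ s') :
    wfCount t c s ≤ wfCount t' c s' :=
  csSup_le' fun _ ⟨hk, _, hA, hcard, hsum⟩ =>
    le_wfCount t' c s' (hk.trans ht) (hA.trans (Icc_subset_Icc_right ht)) hcard (hsum.trans hs)

lemma policyCount_le_wfCount (prio : ℕ → (ℕ → ℝ) → ℕ → ℕ)
    (hprio : Set.BijOn (prio t c) (Set.Icc 1 t) (Set.Icc 1 t)) :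
    policyCount prio t c s ≤ wfCount t c s := by
  refine csSup_le' fun k ⟨hk, hsum⟩ => ?_
  have hsub : (Icc 1 k : Set ℕ) ⊆ Set.Icc 1 t := by
    rw [coe_Icc]
    exact Set.Icc_subset_Icc_right hk
  have hinj : Set.InjOn (prio t c) (Icc 1 k) := hprio.injOn.mono hsub
  refine le_wfCount t c s hk (A := (Icc 1 k).image (prio t c)) ?_ ?_ ?_
  · intro x hx
    obtain ⟨y, hy, rfl⟩ := mem_image.mp hx
    simpa using hprio.mapsTo (hsub hy)
  · rw [card_image_of_injOn hinj, Nat.card_Icc, Nat.add_sub_cancel]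
  · rwa [sum_image hinj]

lemma sfCount_le_wfCount : sfCount t c s ≤ wfCount t c s := by
  refine csSup_le' fun k ⟨hk, hall⟩ => ?_
  obtain ⟨A, hA, hcard⟩ := exists_subset_card_eq (s := Icc 1 t) (by simpa using hk)
  exact le_wfCount t c s hk hA hcard (hall A hA hcard)

end Counting

lemma le_weakestFirst (D : ℕ → ℕ → ℕ) (X R : ℕ → ℕ → ℝ) (hR : ∀ n j, 0 ≤ R n j)
    (Z W : ℕ → ℕ) (h0 : Z 0 ≤ W 0)
    (hZ : ∀ n, Z (n + 1) ≤
      wfCount (∑ j ∈ Icc 1 (Z n), D n j) (X (n + 1)) (∑ j ∈ Icc 1 (Z n), R n j))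
    (hW : ∀ n, W (n + 1) =
      wfCount (∑ j ∈ Icc 1 (W n), D n j) (X (n + 1)) (∑ j ∈ Icc 1 (W n), R n j)) :
    ∀ n, Z n ≤ W n
  | 0 => h0
  | n + 1 => by
    have hsub := Icc_subset_Icc_right (a := 1) (le_weakestFirst D X R hR Z W h0 hZ hW n)
    rw [hW]
    exact (hZ n).trans <| wfCount_mono _ (sum_le_sum_of_subset hsub)
      (sum_le_sum_of_subset_of_nonneg hsub fun j _ _ => hR n j)

lemma measure_tendsto_zero_eq_one_of_le {Ω : Type*} [MeasurableSpace Ω] {P : Measure Ω}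
    [IsProbabilityMeasure P] {Z W : ℕ → Ω → ℕ} (hle : ∀ n ω, Z n ω ≤ W n ω)
    (hW : P {ω | Tendsto (fun n => W n ω) atTop (nhds 0)} = 1) :
    P {ω | Tendsto (fun n => Z n ω) atTop (nhds 0)} = 1 :=
  le_antisymm prob_le_one <| hW ▸ measure_mono fun ω hω =>
    tendsto_of_tendsto_of_tendsto_of_le_of_le tendsto_const_nhds hω
      (fun _ => Nat.zero_le _) (fun n => hle n ω)

theorem envelopment_extinction_general
    {Ω : Type*} [MeasurableSpace Ω] (P : Measure Ω) [IsProbabilityMeasure P]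
    -- the three arrays of random variables
    (D : ℕ → ℕ → Ω → ℕ) (X R : ℕ → ℕ → Ω → ℝ)
    (hRnonneg : ∀ n k ω, 0 ≤ R n k ω)
    -- an arbitrary policy: a claims-dependent priority order on `{1, …, t}`
    (prio : ℕ → (ℕ → ℝ) → ℕ → ℕ)
    (hprio : ∀ t c, Set.BijOn (prio t c) (Set.Icc 1 t) (Set.Icc 1 t))
    -- the RDBP `Γ`, the weakest-first process `W` and the strongest-first
    -- process `S`, each started from a single ancestor
    (Γ W S : ℕ → Ω → ℕ)
    (hΓ0 : ∀ ω, Γ 0 ω = 1) (hW0 : ∀ ω, W 0 ω = 1) (hS0 : ∀ ω, S 0 ω = 1)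
    (hΓrec : ∀ n ω, Γ (n + 1) ω =
      policyCount prio (∑ j ∈ Finset.Icc 1 (Γ n ω), D n j ω)
        (fun j => X (n + 1) j ω)
        (∑ j ∈ Finset.Icc 1 (Γ n ω), R n j ω))
    (hWrec : ∀ n ω, W (n + 1) ω =
      wfCount (∑ j ∈ Finset.Icc 1 (W n ω), D n j ω)
        (fun j => X (n + 1) j ω)
        (∑ j ∈ Finset.Icc 1 (W n ω), R n j ω))
    (hSrec : ∀ n ω, S (n + 1) ω =
      sfCount (∑ j ∈ Finset.Icc 1 (S n ω), D n j ω)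
        (fun j => X (n + 1) j ω)
        (∑ j ∈ Finset.Icc 1 (S n ω), R n j ω))
    -- hypothesis: the weakest-first process dies out almost surely
    (hqW : P {ω | Tendsto (fun n => W n ω) atTop (nhds 0)} = 1) :
    P {ω | Tendsto (fun n => Γ n ω) atTop (nhds 0)} = 1 ∧
    P {ω | Tendsto (fun n => S n ω) atTop (nhds 0)} = 1 := by
  have hΓW : ∀ n ω, Γ n ω ≤ W n ω := fun n ω =>
    le_weakestFirst (D · · ω) (X · · ω) (R · · ω) (fun n j => hRnonneg n j ω) (Γ · ω) (W · ω)
      (by rw [hΓ0, hW0]) (fun n => hΓrec n ω ▸ policyCount_le_wfCount _ _ _ prio (hprio _ _))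
      (fun n => hWrec n ω) n
  have hSW : ∀ n ω, S n ω ≤ W n ω := fun n ω =>
    le_weakestFirst (D · · ω) (X · · ω) (R · · ω) (fun n j => hRnonneg n j ω) (S · ω) (W · ω)
      (by rw [hS0, hW0]) (fun n => hSrec n ω ▸ sfCount_le_wfCount _ _ _)
      (fun n => hWrec n ω) n
  exact ⟨measure_tendsto_zero_eq_one_of_le hΓW hqW, measure_tendsto_zero_eq_one_of_le hSW hqW⟩

/-- **Unconditional envelopment theorem, second part.**
If `m·[1 − F(θ)] ≠ 1` whenever `r ≤ m·μ`, and the weakest-first process dies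
out almost surely (`q_W = 1`), then every RDBP `Γ` on the same arrays dies out
almost surely (`q_Γ = 1`), and consequently so does the strongest-first
process (`q_S = 1`). -/
theorem envelopment_extinction
    {Ω : Type*} [MeasurableSpace Ω] (P : Measure Ω) [IsProbabilityMeasure P]
    -- the three arrays of random variables
    (D : ℕ → ℕ → Ω → ℕ) (X R : ℕ → ℕ → Ω → ℝ)
    (hDmeas : ∀ n k, Measurable (D n k))
    (hXmeas : ∀ n k, Measurable (X n k))
    (hRmeas : ∀ n k, Measurable (R n k))
    -- all entries of the three arrays are mutually independent
    (hIndep : iIndepFun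
      (Sum.elim (fun (nk : ℕ × ℕ) (ω : Ω) => (D nk.1 nk.2 ω : ℝ))
        (Sum.elim (fun (nk : ℕ × ℕ) => X nk.1 nk.2)
          (fun (nk : ℕ × ℕ) => R nk.1 nk.2))) P)
    -- each array is identically distributed
    (hDid : ∀ n k, Measure.map (D n k) P = Measure.map (D 0 1) P)
    (hXid : ∀ n k, Measure.map (X n k) P = Measure.map (X 0 1) P)
    (hRid : ∀ n k, Measure.map (R n k) P = Measure.map (R 0 1) P)
    (hXnonneg : ∀ n k ω, 0 ≤ X n k ω) (hRnonneg : ∀ n k ω, 0 ≤ R n k ω)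
    -- the reproduction law satisfies `p₀ > 0` and `p_j > 0` for some `j > 1`
    (hp0 : 0 < P {ω | D 0 1 ω = 0}) (hpj : ∃ j, 1 < j ∧ 0 < P {ω | D 0 1 ω = j})
    -- finite means
    (hDint : Integrable (fun ω => (D 0 1 ω : ℝ)) P)
    (hXint : Integrable (X 0 1) P) (hRint : Integrable (R 0 1) P)
    (m : ℝ) (hm : m = ∫ ω, (D 0 1 ω : ℝ) ∂P)
    (μ : ℝ) (hμ : μ = ∫ ω, X 0 1 ω ∂P) (hμpos : 0 < μ)
    (r : ℝ) (hr : r = ∫ ω, R 0 1 ω ∂P)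
    -- continuous distribution function of the claims
    (F : ℝ → ℝ) (hF : ∀ x, F x = (P {ω | X 0 1 ω ≤ x}).toReal)
    (hFcont : Continuous F)
    -- if `r ≤ m·μ`, `θ` solves `m ∫_θ^∞ x dF(x) = r` and `m·[1 − F(θ)] ≠ 1`
    (θ : ℝ) (hθ : r ≤ m * μ → m * ∫ ω in {ω | θ < X 0 1 ω}, X 0 1 ω ∂P = r)
    (hne : r ≤ m * μ → m * (1 - F θ) ≠ 1)
    -- an arbitrary policy: a claims-dependent priority order on `{1, …, t}`
    (prio : ℕ → (ℕ → ℝ) → ℕ → ℕ)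
    (hprio : ∀ t c, Set.BijOn (prio t c) (Set.Icc 1 t) (Set.Icc 1 t))
    -- the RDBP `Γ`, the weakest-first process `W` and the strongest-first
    -- process `S`, each started from a single ancestor
    (Γ W S : ℕ → Ω → ℕ)
    (hΓ0 : ∀ ω, Γ 0 ω = 1) (hW0 : ∀ ω, W 0 ω = 1) (hS0 : ∀ ω, S 0 ω = 1)
    (hΓrec : ∀ n ω, Γ (n + 1) ω =
      policyCount prio (∑ j ∈ Finset.Icc 1 (Γ n ω), D n j ω)
        (fun j => X (n + 1) j ω)
        (∑ j ∈ Finset.Icc 1 (Γ n ω), R n j ω))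
    (hWrec : ∀ n ω, W (n + 1) ω =
      wfCount (∑ j ∈ Finset.Icc 1 (W n ω), D n j ω)
        (fun j => X (n + 1) j ω)
        (∑ j ∈ Finset.Icc 1 (W n ω), R n j ω))
    (hSrec : ∀ n ω, S (n + 1) ω =
      sfCount (∑ j ∈ Finset.Icc 1 (S n ω), D n j ω)
        (fun j => X (n + 1) j ω)
        (∑ j ∈ Finset.Icc 1 (S n ω), R n j ω))
    -- hypothesis: the weakest-first process dies out almost surely
    (hqW : P {ω | Tendsto (fun n => W n ω) atTop (nhds 0)} = 1) :
    P {ω | Tendsto (fun n => Γ n ω) atTop (nhds 0)} = 1 ∧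
    P {ω | Tendsto (fun n => S n ω) atTop (nhds 0)} = 1 :=
  envelopment_extinction_general P D X R hRnonneg prio hprio Γ W S hΓ0 hW0 hS0 hΓrec hWrec hSrec hqW

end
end

section
/- Lorenz curve criterion for extinction of the weakest-first society: Let X be a nonnegative random variable with continuous, strictly increasing cumulative distribution function F satisfying F(0) = 0, finite mean μ > 0, and let m > 1 and 0 < r ≤ m·μ. Let τ ≥ 0 satisfy m∫₀^τ x dF(x) = r. Then m·F(τ) < 1 if and only if LC(1/m) > r/(m·μ). -/
open MeasureTheory Filter Set

noncomputable section

/-- Quantile function (generalized inverse) `F⁻¹(t) = inf {x ≥ 0 : F(x) ≥ t}`. -/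
def quantile (F : ℝ → ℝ) (t : ℝ) : ℝ := sInf {x | 0 ≤ x ∧ t ≤ F x}

/-- Lorenz curve `LC(p) = (1/μ) ∫₀^p F⁻¹(t) dt` of a distribution function `F`
with mean `μ`. -/
def lorenz (F : ℝ → ℝ) (μ : ℝ) (p : ℝ) : ℝ := (1 / μ) * ∫ t in (0:ℝ)..p, quantile F t

/-!
Both `∫ x in Iic τ, x ∂ν` (for the law `ν` of `X`) and `∫₀^{F τ} F⁻¹` are layer-cake integrals
of the same tail function `t ↦ (F τ - F t)⁺`: the first because `ν (Ioc t τ) = F τ - F t`, the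
second because `t < F⁻¹ s ↔ F t < s`, which holds for every right-continuous monotone `F`.
Hence `m · μ · LC (F τ) = r`, and the criterion follows because `p ↦ ∫₀^p F⁻¹` is strictly
increasing from `F 0` on, where `F⁻¹` is positive.
-/

open ProbabilityTheory

theorem quantile_nonneg (F : ℝ → ℝ) (s : ℝ) : 0 ≤ quantile F s :=
  Real.sInf_nonneg fun _ hx => hx.1

theorem monotoneOn_quantile (F : ℝ → ℝ) {b : ℝ} (hb : 0 ≤ b) :
    MonotoneOn (quantile F) (Iic (F b)) := fun _ _ _ hs' hss' =>
  csInf_le_csInf ⟨0, fun _ hx => hx.1⟩ ⟨b, hb, hs'⟩ fun _ hx => ⟨hx.1, hss'.trans hx.2⟩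

theorem intervalIntegrable_quantile (F : ℝ → ℝ) {b p q : ℝ} (hb : 0 ≤ b) (hp : p ≤ F b)
    (hq : q ≤ F b) : IntervalIntegrable (quantile F) volume p q :=
  ((monotoneOn_quantile F hb).mono fun _ hs => hs.2.trans (max_le hp hq)).intervalIntegrable

namespace StieltjesFunction

variable (f : StieltjesFunction ℝ)

theorem le_apply_quantile {s b : ℝ} (hb : 0 ≤ b) (hs : s ≤ f b) : s ≤ f (quantile f s) := by
  rw [← f.iInf_Ioi_eq]
  refine le_ciInf fun r => ?_
  obtain ⟨y, ⟨-, hy⟩, hyr⟩ :=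
    exists_lt_of_csInf_lt (s := {x | 0 ≤ x ∧ s ≤ f x}) ⟨b, hb, hs⟩ r.2
  exact hy.trans (f.mono hyr.le)

theorem quantile_le_iff {s b x : ℝ} (hb : 0 ≤ b) (hs : s ≤ f b) (hx : 0 ≤ x) :
    quantile f s ≤ x ↔ s ≤ f x :=
  ⟨fun h => (f.le_apply_quantile hb hs).trans (f.mono h),
    fun h => csInf_le ⟨0, fun _ hy => hy.1⟩ ⟨hx, h⟩⟩

theorem lt_quantile_iff {s b x : ℝ} (hb : 0 ≤ b) (hs : s ≤ f b) (hx : 0 ≤ x) :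
    x < quantile f s ↔ f x < s := by
  simpa only [not_le] using (f.quantile_le_iff hb hs hx).not

theorem setOf_lt_quantile_inter_Ioc {t τ : ℝ} (ht : 0 ≤ t) (hτ : 0 ≤ τ) (hft : 0 ≤ f t) :
    {s | t < quantile f s} ∩ Ioc 0 (f τ) = Ioc (f t) (f τ) := by
  ext s
  simp only [mem_inter_iff, mem_Ioc]
  constructor
  · rintro ⟨hts, -, hs⟩
    exact ⟨(f.lt_quantile_iff hτ hs ht).1 hts, hs⟩
  · rintro ⟨hts, hs⟩
    exact ⟨(f.lt_quantile_iff hτ hs ht).2 hts, hft.trans_lt hts, hs⟩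

theorem integral_quantile_lt_iff {b p q : ℝ} (hb : 0 ≤ b) (hp : f 0 ≤ p) (hq : 0 ≤ q)
    (hpb : p ≤ f b) (hqb : q ≤ f b) :
    ∫ s in 0..p, quantile f s < ∫ s in 0..q, quantile f s ↔ p < q := by
  have hint : ∀ {c}, c ≤ f b → IntervalIntegrable (quantile f) volume 0 c :=
    intervalIntegrable_quantile f hb (hq.trans hqb)
  rw [← sub_pos, intervalIntegral.integral_interval_sub_left (hint hqb) (hint hpb)]
  refine ⟨fun hpos => lt_of_not_ge fun hqp => ?_, fun hpq => ?_⟩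
  · have := intervalIntegral.integral_nonneg (μ := volume) hqp fun s _ => quantile_nonneg f s
    rw [intervalIntegral.integral_symm] at hpos
    linarith
  · refine intervalIntegral.intervalIntegral_pos_of_pos_on
      (intervalIntegrable_quantile f hb hpb hqb) (fun s hs => ?_) hpq
    exact (f.lt_quantile_iff hb (hs.2.le.trans hqb) le_rfl).2 (hp.trans_lt hs.1)

end StieltjesFunction

namespace MeasureTheory

theorem integral_eq_integral_of_measureReal_lt_eq {α β : Type*} [MeasurableSpace α]
    [MeasurableSpace β] {μ : Measure α} {ν : Measure β} {f : α → ℝ} {g : β → ℝ}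
    (hf : Integrable f μ) (hg : Integrable g ν) (hf0 : 0 ≤ᵐ[μ] f) (hg0 : 0 ≤ᵐ[ν] g)
    (h : ∀ t > 0, μ.real {a | t < f a} = ν.real {b | t < g b}) :
    ∫ a, f a ∂μ = ∫ b, g b ∂ν := by
  rw [hf.integral_eq_integral_meas_lt hf0, hg.integral_eq_integral_meas_lt hg0]
  exact setIntegral_congr_fun measurableSet_Ioi h

end MeasureTheory

theorem setIntegral_Iic_eq_integral_quantile_cdf (ν : Measure ℝ) [IsProbabilityMeasure ν]
    (hν : ∀ᵐ x ∂ν, 0 ≤ x) {τ : ℝ} (hτ : 0 ≤ τ) :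
    ∫ x in Iic τ, x ∂ν = ∫ s in 0..cdf ν τ, quantile (cdf ν) s := by
  rw [intervalIntegral.integral_of_le (cdf_nonneg ν τ)]
  refine integral_eq_integral_of_measureReal_lt_eq ?_
    (intervalIntegrable_quantile _ hτ (cdf_nonneg ν τ) le_rfl).1 (ae_restrict_of_ae hν)
    (ae_of_all _ (quantile_nonneg _)) fun t ht => ?_
  · refine (integrable_const τ).mono' aestronglyMeasurable_id ?_
    filter_upwards [ae_restrict_mem measurableSet_Iic, ae_restrict_of_ae hν] with x hxτ hx0
    simpa [abs_of_nonneg hx0] using hxτ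
  · change (ν.restrict (Iic τ)).real (Ioi t) = _
    rw [measureReal_restrict_apply measurableSet_Ioi, measureReal_restrict_apply' measurableSet_Ioc,
      (cdf ν).setOf_lt_quantile_inter_Ioc ht.le hτ (cdf_nonneg ν t), Ioi_inter_Iic, measureReal_def,
      measureReal_def]
    conv_lhs => rw [← measure_cdf ν]
    rw [StieltjesFunction.measure_Ioc, Real.volume_Ioc]

theorem lorenz_wfs_extinction_criterion_general
    {Ω : Type*} [MeasurableSpace Ω] (P : Measure Ω) [IsProbabilityMeasure P]
    (X : Ω → ℝ) (hXmeas : Measurable X) (hXnonneg : ∀ ω, 0 ≤ X ω)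
    (μ : ℝ) (hμpos : 0 < μ)
    (F : ℝ → ℝ) (hF : ∀ x, F x = (P {ω | X ω ≤ x}).toReal)
    (m r : ℝ) (hm : 1 < m)
    (τ : ℝ) (hτnonneg : 0 ≤ τ)
    (hτ : m * ∫ ω in {ω | X ω ≤ τ}, X ω ∂P = r) :
    m * F τ < 1 ↔ r / (m * μ) < lorenz F μ (1 / m) := by
  set ν := P.map X
  have : IsProbabilityMeasure ν := Measure.isProbabilityMeasure_map hXmeas.aemeasurable
  have hFν : F = cdf ν := funext fun x => by
    rw [hF, cdf_eq_real, map_measureReal_apply hXmeas measurableSet_Iic]; rfl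
  subst hFν
  have hm0 : 0 < m := one_pos.trans hm
  have hr : m * ∫ s in 0..cdf ν τ, quantile (cdf ν) s = r := by
    rw [← setIntegral_Iic_eq_integral_quantile_cdf ν
      ((ae_map_iff hXmeas.aemeasurable measurableSet_Ici).2 (ae_of_all _ hXnonneg)) hτnonneg,
      setIntegral_map (f := fun x : ℝ => x) measurableSet_Iic aestronglyMeasurable_id
        hXmeas.aemeasurable]
    exact hτ
  obtain ⟨b, hb, hτb⟩ := (((tendsto_order.1 (tendsto_cdf_atTop ν)).1 (1 / m)
    ((div_lt_one hm0).2 hm)).and (eventually_ge_atTop τ)).exists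
  rw [← lt_div_iff₀' hm0, lorenz, ← hr, mul_div_mul_left _ _ hm0.ne', one_div_mul_eq_div,
    div_lt_div_iff_of_pos_right hμpos]
  exact ((cdf ν).integral_quantile_lt_iff (hτnonneg.trans hτb) ((cdf ν).mono hτnonneg)
    (by positivity) ((cdf ν).mono hτb) hb.le).symm

/-- **Lorenz curve criterion for extinction of the weakest-first society.**
If `X ≥ 0` has continuous, strictly increasing distribution function `F` with
`F(0) = 0` and finite mean `μ > 0`, `m > 1`, `0 < r ≤ m·μ`, and `τ ≥ 0`
satisfies `m ∫₀^τ x dF(x) = r`, then `m·F(τ) < 1 ↔ LC(1/m) > r/(m·μ)`. -/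
theorem lorenz_wfs_extinction_criterion
    {Ω : Type*} [MeasurableSpace Ω] (P : Measure Ω) [IsProbabilityMeasure P]
    (X : Ω → ℝ) (hXmeas : Measurable X) (hXnonneg : ∀ ω, 0 ≤ X ω)
    (hXint : Integrable X P)
    (μ : ℝ) (hμ : μ = ∫ ω, X ω ∂P) (hμpos : 0 < μ)
    (F : ℝ → ℝ) (hF : ∀ x, F x = (P {ω | X ω ≤ x}).toReal)
    (hFcont : Continuous F) (hFmono : StrictMonoOn F (Ici 0)) (hF0 : F 0 = 0)
    (m r : ℝ) (hm : 1 < m) (hrpos : 0 < r) (hrm : r ≤ m * μ)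
    (τ : ℝ) (hτnonneg : 0 ≤ τ)
    (hτ : m * ∫ ω in {ω | X ω ≤ τ}, X ω ∂P = r) :
    m * F τ < 1 ↔ r / (m * μ) < lorenz F μ (1 / m) :=
  lorenz_wfs_extinction_criterion_general P X hXmeas hXnonneg μ hμpos F hF m r hm τ hτnonneg hτ

end
end
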